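/- arXiv:1204.3212 — 7 statements merged into one kernel-verified Lean document; each statement's English description precedes it below -/
import Mathlib

section
/- The set of global minimizers of L_{y,λ} is nonempty and compact if and only if Ker Φ ∩ Ker D* = {0}. -/
open Matrix MeasureTheory ProbabilityTheory

/-- The analysis lasso objective `L_{y,λ}(x) = (1/2)‖y − Φx‖₂² + λ‖D*x‖₁`. -/
noncomputable def lassoObj {N Q P : ℕ} (Φ : Matrix (Fin Q) (Fin N) ℝ)
    (D : Matrix (Fin N) (Fin P) ℝ) (y : Fin Q → ℝ) (lam : ℝ) (x : Fin N → ℝ) : ℝ :=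
  (1 / 2) * ∑ i, (y i - Φ.mulVec x i) ^ 2 + lam * ∑ j, |Dᵀ.mulVec x j|

/-- `x` is a solution of `(P_λ(y))`, i.e. a global minimizer of the lasso objective. -/
def IsLassoSol {N Q P : ℕ} (Φ : Matrix (Fin Q) (Fin N) ℝ)
    (D : Matrix (Fin N) (Fin P) ℝ) (y : Fin Q → ℝ) (lam : ℝ) (x : Fin N → ℝ) : Prop :=
  ∀ x' : Fin N → ℝ, lassoObj Φ D y lam x ≤ lassoObj Φ D y lam x'

/-!
`L_{y,λ}` depends on `x` only through `A x = (Φ x, D* x)`. If `v ≠ 0` lies in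
`Ker Φ ∩ Ker D*`, then with any minimizer `x` the whole line `x + ℝ v` consists of minimizers,
so they are not bounded. Conversely, if `A` is injective it is a closed embedding, and
`L_{y,λ} = F ∘ A` where `F (u, w) = ½‖y - u‖² + λ‖w‖₁` is a sum of coercive functions of one
coordinate each; so `L_{y,λ}` is coercive, attains its minimum, and its minimizers form a closed
subset of a compact sublevel set.
-/

open Filter Topology

theorem tendsto_sum_apply_cocompact_atTop {ι : Type*} [Fintype ι] {X : ι → Type*}
    [∀ i, TopologicalSpace (X i)] {g : ∀ i, X i → ℝ}
    (hg : ∀ i, Tendsto (g i) (cocompact (X i)) atTop) (hg_bdd : ∀ i, BddBelow (Set.range (g i))) :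
    Tendsto (fun x : ∀ i, X i => ∑ i, g i (x i)) (cocompact (∀ i, X i)) atTop := by
  classical
  choose b hb using hg_bdd
  rw [← coprodᵢ_cocompact, Filter.coprodᵢ, tendsto_iSup]
  intro i
  refine (tendsto_atTop_add_right_of_le _ (∑ j ∈ Finset.univ.erase i, b j)
    ((hg i).comp tendsto_comap) fun x => Finset.sum_le_sum fun j _ => hb j ⟨x j, rfl⟩).congr
    fun x => Finset.add_sum_erase _ (fun j => g j (x j)) (Finset.mem_univ i)

theorem tendsto_sub_sq_cocompact_atTop (c : ℝ) :
    Tendsto (fun t : ℝ => (c - t) ^ 2) (cocompact ℝ) atTop := by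
  have := (tendsto_pow_atTop two_ne_zero).comp (tendsto_dist_left_cocompact_atTop c)
  simpa only [Function.comp_def, Real.dist_eq, sq_abs] using this

theorem Continuous.nonempty_and_isCompact_setOf_forall_le {X α : Type*} [TopologicalSpace X]
    [Nonempty X] [LinearOrder α] [TopologicalSpace α] [OrderClosedTopology α] [NoMaxOrder α]
    {f : X → α} (hf : Continuous f) (hlim : Tendsto f (cocompact X) atTop) :
    {x | ∀ x', f x ≤ f x'}.Nonempty ∧ IsCompact {x | ∀ x', f x ≤ f x'} := by
  obtain ⟨x₀, hx₀⟩ := hf.exists_forall_le hlim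
  obtain ⟨K, hK, hKf⟩ := mem_cocompact.1 (hlim.eventually_gt_atTop (f x₀))
  refine ⟨⟨x₀, hx₀⟩, hK.of_isClosed_subset ?_ fun x hx => ?_⟩
  · rw [Set.ofPred_forall]
    exact isClosed_iInter fun x' => isClosed_le hf continuous_const
  · by_contra hxK
    exact (hKf hxK).not_ge (hx x₀)

theorem eq_zero_of_isBounded_of_forall_add_smul_mem {E : Type*} [NormedAddCommGroup E]
    [NormedSpace ℝ E] {s : Set E} (hs : Bornology.IsBounded s) {x v : E}
    (h : ∀ t : ℝ, x + t • v ∈ s) : v = 0 := by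
  obtain ⟨R, hR⟩ := hs.exists_norm_le
  by_contra hv
  have hv' : 0 < ‖v‖ := norm_pos_iff.2 hv
  have hR0 : 0 ≤ R := (norm_nonneg _).trans (hR _ (h 0))
  set t := (R + ‖x‖ + 1) / ‖v‖
  have htv : ‖t • v‖ = R + ‖x‖ + 1 := by
    rw [norm_smul, Real.norm_eq_abs, abs_of_nonneg (by positivity), div_mul_cancel₀ _ hv'.ne']
  have htriangle : ‖t • v‖ ≤ ‖x + t • v‖ + ‖x‖ := by
    simpa using norm_sub_le (x + t • v) x
  linarith [hR _ (h t)]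

section Lasso

variable {N Q P : ℕ} (Φ : Matrix (Fin Q) (Fin N) ℝ) (D : Matrix (Fin N) (Fin P) ℝ)
  (y : Fin Q → ℝ) (lam : ℝ)

theorem continuous_lassoObj : Continuous (lassoObj Φ D y lam) := by
  unfold lassoObj
  fun_prop

theorem lassoObj_add_of_mulVec_eq_zero {v : Fin N → ℝ} (hΦ : Φ *ᵥ v = 0) (hD : Dᵀ *ᵥ v = 0)
    (x : Fin N → ℝ) : lassoObj Φ D y lam (x + v) = lassoObj Φ D y lam x := by
  simp [lassoObj, mulVec_add, hΦ, hD]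

noncomputable def lassoTerm : Fin Q ⊕ Fin P → ℝ → ℝ :=
  Sum.elim (fun i t => 1 / 2 * (y i - t) ^ 2) fun _ t => lam * |t|

theorem lassoObj_eq_sum_lassoTerm (x : Fin N → ℝ) :
    lassoObj Φ D y lam x = ∑ k, lassoTerm y lam k ((fromRows Φ Dᵀ *ᵥ x) k) := by
  simp only [lassoObj, lassoTerm, fromRows_mulVec, Fintype.sum_sum_type, Sum.elim_inl,
    Sum.elim_inr, Finset.mul_sum]

theorem lassoTerm_nonneg (hlam : 0 ≤ lam) (k : Fin Q ⊕ Fin P) (t : ℝ) :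
    0 ≤ lassoTerm y lam k t := by
  cases k with
  | inl i => exact mul_nonneg one_half_pos.le (sq_nonneg _)
  | inr j => exact mul_nonneg hlam (abs_nonneg t)

theorem tendsto_lassoTerm_cocompact_atTop (hlam : 0 < lam) (k : Fin Q ⊕ Fin P) :
    Tendsto (lassoTerm y lam k) (cocompact ℝ) atTop := by
  cases k with
  | inl i => exact (tendsto_sub_sq_cocompact_atTop (y i)).const_mul_atTop one_half_pos
  | inr j => exact tendsto_norm_cocompact_atTop.const_mul_atTop hlam

theorem tendsto_lassoObj_cocompact_atTop (hlam : 0 < lam)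
    (hker : ∀ x : Fin N → ℝ, Φ *ᵥ x = 0 → Dᵀ *ᵥ x = 0 → x = 0) :
    Tendsto (lassoObj Φ D y lam) (cocompact _) atTop := by
  have hA : IsClosedEmbedding (fromRows Φ Dᵀ).mulVecLin := by
    refine LinearMap.isClosedEmbedding_of_injective (ker_mulVecLin_eq_bot_iff.2 fun x hx => ?_)
    rw [fromRows_mulVec] at hx
    exact hker x (funext fun i => congr_fun hx (.inl i)) (funext fun j => congr_fun hx (.inr j))
  have hF := tendsto_sum_apply_cocompact_atTop
    (tendsto_lassoTerm_cocompact_atTop (P := P) y lam hlam) fun k => ⟨0, Set.forall_mem_range.2 (lassoTerm_nonneg y lam hlam.le k)⟩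
  exact (hF.comp hA.tendsto_cocompact).congr fun x => (lassoObj_eq_sum_lassoTerm Φ D y lam x).symm

end Lasso

theorem lasso_minimizers_nonempty_compact_iff_general
    {N Q P : ℕ}
    (Φ : Matrix (Fin Q) (Fin N) ℝ) (D : Matrix (Fin N) (Fin P) ℝ)
    (y : Fin Q → ℝ) (lam : ℝ) (hlam : 0 < lam) :
    ({x : Fin N → ℝ | IsLassoSol Φ D y lam x}.Nonempty ∧
        IsCompact {x : Fin N → ℝ | IsLassoSol Φ D y lam x}) ↔
      (∀ x : Fin N → ℝ, Φ.mulVec x = 0 → Dᵀ.mulVec x = 0 → x = 0) := by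
  constructor
  · rintro ⟨⟨x₀, hx₀⟩, hcompact⟩ v hΦv hDv
    refine eq_zero_of_isBounded_of_forall_add_smul_mem hcompact.isBounded (x := x₀) fun t x' => ?_
    rw [lassoObj_add_of_mulVec_eq_zero Φ D y lam (by rw [mulVec_smul, hΦv, smul_zero])
      (by rw [mulVec_smul, hDv, smul_zero])]
    exact hx₀ x'
  · intro hker
    exact (continuous_lassoObj Φ D y lam).nonempty_and_isCompact_setOf_forall_le
      (tendsto_lassoObj_cocompact_atTop Φ D y lam hlam hker)

/-- The set of global minimizers of `L_{y,λ}` is nonempty and compact if and only if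
`Ker Φ ∩ Ker D* = {0}`. -/
theorem lasso_minimizers_nonempty_compact_iff
    {N Q P : ℕ} (hN : 0 < N) (hQ : 0 < Q) (hP : 0 < P)
    (Φ : Matrix (Fin Q) (Fin N) ℝ) (D : Matrix (Fin N) (Fin P) ℝ)
    (y : Fin Q → ℝ) (lam : ℝ) (hlam : 0 < lam) :
    ({x : Fin N → ℝ | IsLassoSol Φ D y lam x}.Nonempty ∧
        IsCompact {x : Fin N → ℝ | IsLassoSol Φ D y lam x}) ↔
      (∀ x : Fin N → ℝ, Φ.mulVec x = 0 → Dᵀ.mulVec x = 0 → x = 0) :=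
  lasso_minimizers_nonempty_compact_iff_general Φ D y lam hlam
end

section
/- A vector x⋆ ∈ ℝ^N is a global minimizer of L_{y,λ} if and only if there exists σ ∈ ℝ^{|J|} with ‖σ‖_∞ ≤ 1 such that Φ*(Φ x⋆ − y) + λ D_I s_I + λ D_J σ = 0, where I is the D-support of x⋆, J = I^c its D-cosupport, and s = sign(D* x⋆). -/
/-!
If `x` minimises the objective, its one-sided derivative in every direction `h` is nonnegative.
Since `|a + t b| - |a| = t sign(a) b` for small `t > 0` when `a ≠ 0`, and `= t |b|` when `a = 0`,
this says `⟨c, h⟩ ≤ λ ∑_{j ∈ J} |(D* h)_j|` for `c = -(Φ*(Φx - y) + λ D s)`. The right-hand side is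
the support function of the compact convex set `λ D(B)`, where `B` is the box of vectors supported
on `J` with entries in `[-1, 1]`, so Hahn–Banach separation puts `c` in `λ D(B)`, which gives `σ`.
Conversely, `s + σ` is a subgradient of `‖·‖₁` at `D* x`, so the stationarity equation bounds the
increment of the objective from below by `½‖Φ h‖²`.
-/

open Matrix MeasureTheory ProbabilityTheory

open Filter Topology

lemma sign_add_mul_le_abs_add_sub_abs {a σ : ℝ} (hσ : a ≠ 0 → σ = 0) (hσ₁ : |σ| ≤ 1) (b : ℝ) :
    (Real.sign a + σ) * b ≤ |a + b| - |a| := by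
  rcases lt_trichotomy a 0 with ha | rfl | ha
  · rw [hσ ha.ne, Real.sign_of_neg ha, abs_of_neg ha]
    linarith [neg_le_abs (a + b)]
  · rw [Real.sign_zero, zero_add, zero_add, abs_zero, sub_zero]
    calc σ * b ≤ |σ| * |b| := (le_abs_self _).trans (abs_mul σ b).le
      _ ≤ |b| := mul_le_of_le_one_left (abs_nonneg b) hσ₁
  · rw [hσ ha.ne', Real.sign_of_pos ha, abs_of_pos ha]
    linarith [le_abs_self (a + b)]

lemma eventually_abs_add_mul_sub_abs (a b : ℝ) :
    ∀ᶠ t in 𝓝[>] (0 : ℝ),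
      |a + t * b| - |a| = t * (Real.sign a * b + if a = 0 then |b| else 0) := by
  have hlim : Tendsto (fun t : ℝ => a + t * b) (𝓝[>] 0) (𝓝 a) := by
    have : Continuous fun t : ℝ => a + t * b := by fun_prop
    simpa using (this.tendsto 0).mono_left nhdsWithin_le_nhds
  rcases lt_trichotomy a 0 with ha | rfl | ha
  · filter_upwards [hlim.eventually (gt_mem_nhds ha)] with t ht
    rw [abs_of_neg ht, abs_of_neg ha, Real.sign_of_neg ha, if_neg ha.ne]
    ring
  · filter_upwards [self_mem_nhdsWithin] with t (ht : 0 < t)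
    simp [abs_mul, abs_of_pos ht]
  · filter_upwards [hlim.eventually (lt_mem_nhds ha)] with t ht
    rw [abs_of_pos ht, abs_of_pos ha, Real.sign_of_pos ha, if_neg ha.ne']
    ring

lemma nonneg_of_eventually_nonneg_mul_add_sq_mul {G B : ℝ}
    (h : ∀ᶠ t in 𝓝[>] (0 : ℝ), 0 ≤ t * G + t ^ 2 * B) : 0 ≤ G := by
  have hlim : Tendsto (fun t : ℝ => G + t * B) (𝓝[>] 0) (𝓝 G) := by
    have : Continuous fun t : ℝ => G + t * B := by fun_prop
    simpa using (this.tendsto 0).mono_left nhdsWithin_le_nhds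
  refine ge_of_tendsto hlim ?_
  filter_upwards [h, self_mem_nhdsWithin] with t ht (htpos : 0 < t)
  exact nonneg_of_mul_nonneg_right (by linear_combination ht) htpos

lemma exists_mulVec_eq_of_dotProduct_le {m n : Type*} [Fintype m] [Fintype n]
    (A : Matrix m n ℝ) (J : Finset n) (c : m → ℝ)
    (hc : ∀ h, c ⬝ᵥ h ≤ ∑ j ∈ J, |(Aᵀ *ᵥ h) j|) :
    ∃ σ : n → ℝ, (∀ j ∉ J, σ j = 0) ∧ (∀ j, |σ j| ≤ 1) ∧ A *ᵥ σ = c := by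
  classical
  set C : Set (n → ℝ) := Set.univ.pi fun j => if j ∈ J then Set.Icc (-1) 1 else {0}
  suffices c ∈ A.mulVecLin '' C by
    obtain ⟨σ, hσ, rfl⟩ := this
    refine ⟨σ, fun j hj => ?_, fun j => ?_, rfl⟩
    · simpa [hj] using hσ j (Set.mem_univ j)
    · have := hσ j (Set.mem_univ j)
      dsimp only at this
      split_ifs at this with hj
      · exact abs_le.2 this
      · simp_all
  by_contra hcK
  have hCcompact : IsCompact C :=
    isCompact_univ_pi fun j => by split_ifs; exacts [isCompact_Icc, isCompact_singleton]
  have hCconvex : Convex ℝ C :=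
    convex_pi fun j _ => by split_ifs; exacts [convex_Icc _ _, convex_singleton _]
  obtain ⟨f, u, hfK, hfc⟩ := geometric_hahn_banach_closed_point (hCconvex.linear_image _)
    (hCcompact.image A.mulVecLin.continuous_of_finiteDimensional).isClosed hcK
  set v : m → ℝ := fun i => f fun k => if i = k then 1 else 0
  have hf : ∀ x, f x = x ⬝ᵥ v := fun x => by
    simpa [dotProduct] using LinearMap.pi_apply_eq_sum_univ (f : (m → ℝ) →ₗ[ℝ] ℝ) x
  -- `σ` maximises `f ∘ A` over the box `C`
  set σ : n → ℝ := fun j => if j ∈ J then (SignType.sign ((Aᵀ *ᵥ v) j) : ℝ) else 0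
  have hσC : σ ∈ C := fun j _ => by
    by_cases hj : j ∈ J
    · simp only [σ, hj, if_true]
      cases SignType.sign ((Aᵀ *ᵥ v) j) <;> norm_num
    · simp [σ, hj]
  have hfσ : f (A *ᵥ σ) = ∑ j ∈ J, |(Aᵀ *ᵥ v) j| := by
    rw [hf, dotProduct_comm, ← dotProduct_transpose_mulVec]
    simp only [dotProduct, σ, ite_mul, zero_mul, sign_mul_self]
    rw [Finset.sum_ite_mem, Finset.univ_inter]
  have hfσu : f (A *ᵥ σ) < u := hfK _ ⟨σ, hσC, rfl⟩
  linarith [hc v, hf c]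

noncomputable def dCosupport {n p : Type*} [Fintype n] [Fintype p] (D : Matrix n p ℝ) (x : n → ℝ) :
    Finset p :=
  {j | (Dᵀ *ᵥ x) j = 0}

section Lasso

variable {N Q P : ℕ} {Φ : Matrix (Fin Q) (Fin N) ℝ} {D : Matrix (Fin N) (Fin P) ℝ}
  {y : Fin Q → ℝ} {lam : ℝ} {x : Fin N → ℝ}

lemma lassoObj_add (h : Fin N → ℝ) :
    lassoObj Φ D y lam (x + h) = lassoObj Φ D y lam x + Φᵀ *ᵥ (Φ *ᵥ x - y) ⬝ᵥ h
      + 1 / 2 * (Φ *ᵥ h ⬝ᵥ Φ *ᵥ h)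
      + lam * ∑ j, (|(Dᵀ *ᵥ x) j + (Dᵀ *ᵥ h) j| - |(Dᵀ *ᵥ x) j|) := by
  have hquad : ∑ i, (y i - (Φ *ᵥ (x + h)) i) ^ 2 = ∑ i, (y i - (Φ *ᵥ x) i) ^ 2
      + 2 * (Φᵀ *ᵥ (Φ *ᵥ x - y) ⬝ᵥ h) + Φ *ᵥ h ⬝ᵥ Φ *ᵥ h := by
    rw [dotProduct_comm, dotProduct_transpose_mulVec]
    simp only [dotProduct, mulVec_add, Pi.add_apply, Pi.sub_apply, Finset.mul_sum,
      ← Finset.sum_add_distrib]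
    exact Finset.sum_congr rfl fun i _ => by ring
  have habs : ∑ j, |(Dᵀ *ᵥ (x + h)) j| = ∑ j, |(Dᵀ *ᵥ x) j|
      + ∑ j, (|(Dᵀ *ᵥ x) j + (Dᵀ *ᵥ h) j| - |(Dᵀ *ᵥ x) j|) := by
    rw [← Finset.sum_add_distrib, mulVec_add]
    simp
  unfold lassoObj
  rw [hquad, habs]
  ring

lemma isLassoSol_of_stationary (hlam : 0 ≤ lam) {σ : Fin P → ℝ}
    (hσ : ∀ j, (Dᵀ *ᵥ x) j ≠ 0 → σ j = 0) (hσ₁ : ∀ j, |σ j| ≤ 1)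
    (hstat : Φᵀ *ᵥ (Φ *ᵥ x - y) + lam • D *ᵥ (fun j => Real.sign ((Dᵀ *ᵥ x) j))
      + lam • D *ᵥ σ = 0) :
    IsLassoSol Φ D y lam x := by
  intro x'
  obtain ⟨h, rfl⟩ : ∃ h, x' = x + h := ⟨x' - x, by abel⟩
  set s : Fin P → ℝ := fun j => Real.sign ((Dᵀ *ᵥ x) j)
  have hgrad : Φᵀ *ᵥ (Φ *ᵥ x - y) = -(lam • D *ᵥ (s + σ)) := by
    rw [mulVec_add, smul_add]
    exact eq_neg_of_add_eq_zero_left (by rwa [← add_assoc])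
  have hsubgrad : (s + σ) ⬝ᵥ Dᵀ *ᵥ h
      ≤ ∑ j, (|(Dᵀ *ᵥ x) j + (Dᵀ *ᵥ h) j| - |(Dᵀ *ᵥ x) j|) :=
    Finset.sum_le_sum fun j _ => sign_add_mul_le_abs_add_sub_abs (hσ j) (hσ₁ j) _
  have hquad : 0 ≤ Φ *ᵥ h ⬝ᵥ Φ *ᵥ h := Finset.sum_nonneg fun _ _ => mul_self_nonneg _
  rw [lassoObj_add, hgrad, neg_dotProduct, smul_dotProduct, dotProduct_comm,
    ← dotProduct_transpose_mulVec, smul_eq_mul]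
  nlinarith [mul_le_mul_of_nonneg_left hsubgrad hlam]

lemma IsLassoSol.dotProduct_le (hsol : IsLassoSol Φ D y lam x) (h : Fin N → ℝ) :
    -(Φᵀ *ᵥ (Φ *ᵥ x - y) + lam • D *ᵥ (fun j => Real.sign ((Dᵀ *ᵥ x) j))) ⬝ᵥ h
      ≤ lam * ∑ j ∈ dCosupport D x, |(Dᵀ *ᵥ h) j| := by
  set s : Fin P → ℝ := fun j => Real.sign ((Dᵀ *ᵥ x) j)
  set G := Φᵀ *ᵥ (Φ *ᵥ x - y) ⬝ᵥ h + lam * (s ⬝ᵥ Dᵀ *ᵥ h + ∑ j ∈ dCosupport D x, |(Dᵀ *ᵥ h) j|)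
  have hG : 0 ≤ G := by
    refine nonneg_of_eventually_nonneg_mul_add_sq_mul (B := 1 / 2 * (Φ *ᵥ h ⬝ᵥ Φ *ᵥ h)) ?_
    filter_upwards [eventually_all.2 fun j =>
      eventually_abs_add_mul_sub_abs ((Dᵀ *ᵥ x) j) ((Dᵀ *ᵥ h) j)] with t ht
    have hmin := hsol (x + t • h)
    rw [lassoObj_add, mulVec_smul, mulVec_smul] at hmin
    have hsum : ∑ j, (|(Dᵀ *ᵥ x) j + (t • Dᵀ *ᵥ h) j| - |(Dᵀ *ᵥ x) j|)
        = t * (s ⬝ᵥ Dᵀ *ᵥ h + ∑ j ∈ dCosupport D x, |(Dᵀ *ᵥ h) j|) := by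
      simp only [Pi.smul_apply, smul_eq_mul, ht, ← Finset.mul_sum, Finset.sum_add_distrib,
        dCosupport, Finset.sum_filter, dotProduct, s]
    rw [hsum, dotProduct_smul, smul_dotProduct, dotProduct_smul, smul_eq_mul, smul_eq_mul,
      smul_eq_mul] at hmin
    linear_combination hmin
  rw [neg_dotProduct, add_dotProduct, smul_dotProduct, dotProduct_comm (D *ᵥ s),
    ← dotProduct_transpose_mulVec, smul_eq_mul]
  linarith

end Lasso

theorem lasso_first_order_optimality_general
    {N Q P : ℕ}
    (Φ : Matrix (Fin Q) (Fin N) ℝ) (D : Matrix (Fin N) (Fin P) ℝ)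
    (y : Fin Q → ℝ) (lam : ℝ) (hlam : 0 < lam) (xs : Fin N → ℝ) :
    IsLassoSol Φ D y lam xs ↔
      ∃ σ : Fin P → ℝ,
        (∀ j, Dᵀ.mulVec xs j ≠ 0 → σ j = 0) ∧
        (∀ j, |σ j| ≤ 1) ∧
        Φᵀ.mulVec (Φ.mulVec xs - y)
            + lam • D.mulVec (fun i => Real.sign (Dᵀ.mulVec xs i))
            + lam • D.mulVec σ = 0 := by
  refine ⟨fun hsol => ?_, fun ⟨σ, hσ, hσ₁, hstat⟩ => isLassoSol_of_stationary hlam.le hσ hσ₁ hstat⟩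
  obtain ⟨σ, hσ, hσ₁, hDσ⟩ := exists_mulVec_eq_of_dotProduct_le (lam • D) (dCosupport D xs) _
    fun h => by
      simp only [transpose_smul, smul_mulVec, Pi.smul_apply, smul_eq_mul, abs_mul,
        abs_of_pos hlam, ← Finset.mul_sum]
      exact hsol.dotProduct_le h
  refine ⟨σ, fun j hj => hσ j (by simpa [dCosupport] using hj), hσ₁, ?_⟩
  rw [smul_mulVec] at hDσ
  rw [hDσ, add_neg_cancel]

/-- First-order optimality: `x⋆` is a global minimizer of `L_{y,λ}` iff there is a
vector `σ` supported on the `D`-cosupport `J` with `‖σ‖_∞ ≤ 1` such that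
`Φ*(Φx⋆ − y) + λ D_I s_I + λ D_J σ = 0`, where `s = sign(D* x⋆)`. -/
theorem lasso_first_order_optimality
    {N Q P : ℕ} (hN : 0 < N) (hQ : 0 < Q) (hP : 0 < P)
    (Φ : Matrix (Fin Q) (Fin N) ℝ) (D : Matrix (Fin N) (Fin P) ℝ)
    (y : Fin Q → ℝ) (lam : ℝ) (hlam : 0 < lam) (xs : Fin N → ℝ) :
    IsLassoSol Φ D y lam xs ↔
      ∃ σ : Fin P → ℝ,
        (∀ j, Dᵀ.mulVec xs j ≠ 0 → σ j = 0) ∧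
        (∀ j, |σ j| ≤ 1) ∧
        Φᵀ.mulVec (Φ.mulVec xs - y)
            + lam • D.mulVec (fun i => Real.sign (Dᵀ.mulVec xs i))
            + lam • D.mulVec σ = 0 :=
  lasso_first_order_optimality_general Φ D y lam hlam xs
end

section
/- Let x⋆ be a solution of (P_λ(y)) with D-support I, D-cosupport J and s = sign(D* x⋆). If (H_J) holds, then x⋆ satisfies the implicit equation x⋆ = A^[J] Φ* y − λ A^[J] D_I s_I. -/
open Matrix MeasureTheory ProbabilityTheory

/-- The cospace `G_J = Ker D_J^*`. -/
def GJ {N P : ℕ} (D : Matrix (Fin N) (Fin P) ℝ) (J : Set (Fin P)) :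
    Submodule ℝ (Fin N → ℝ) where
  carrier := {x | ∀ j ∈ J, Dᵀ.mulVec x j = 0}
  add_mem' := by
    intro a b ha hb j hj
    simp [Matrix.mulVec_add, ha j hj, hb j hj]
  zero_mem' := by intro j hj; simp
  smul_mem' := by
    intro c a ha j hj
    simp [Matrix.mulVec_smul, ha j hj]

/-- Condition `(H_J)`: `Ker Φ ∩ G_J = {0}`. -/
def HJcond {N Q P : ℕ} (Φ : Matrix (Fin Q) (Fin N) ℝ) (D : Matrix (Fin N) (Fin P) ℝ)
    (J : Set (Fin P)) : Prop :=
  ∀ x : Fin N → ℝ, Φ.mulVec x = 0 → x ∈ GJ D J → x = 0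

/-- The columns of `U` form a basis of the subspace `G`. -/
def ColBasis {N r : ℕ} (U : Matrix (Fin N) (Fin r) ℝ) (G : Submodule ℝ (Fin N → ℝ)) : Prop :=
  LinearIndependent ℝ (fun k : Fin r => (fun i => U i k)) ∧
  Submodule.span ℝ (Set.range (fun k : Fin r => (fun i => U i k))) = G

/-- The matrix `A^[J] = U (U* Φ* Φ U)⁻¹ U*` built from a basis matrix `U` of `G_J`. -/
noncomputable def AJmat {N Q r : ℕ} (Φ : Matrix (Fin Q) (Fin N) ℝ)
    (U : Matrix (Fin N) (Fin r) ℝ) : Matrix (Fin N) (Fin N) ℝ :=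
  U * (Uᵀ * Φᵀ * Φ * U)⁻¹ * Uᵀ

/-!
Directions `h ∈ G_J` leave the zero entries of `D* x⋆` at zero, so `t ↦ L(x⋆ + t h)` is
differentiable at `0`, and minimality gives `⟨Φ*(Φ x⋆ - y) + λ D s, h⟩ = 0` on `G_J`, that is
`U*(Φ*Φ x⋆ - Φ* y + λ D s) = 0` (note `D s = D_I s_I`, as `s` vanishes on `J`). Writing
`x⋆ = U c`, condition `(H_J)` makes the Gram matrix `U* Φ* Φ U` positive definite, and solving for
`c` gives `x⋆ = A^[J] (Φ* y - λ D s)`.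
-/

theorem hasDerivAt_const_add_mul (u w : ℝ) : HasDerivAt (fun t => u + t * w) w 0 := by
  simpa using ((hasDerivAt_id (0 : ℝ)).mul_const w).const_add u

theorem hasDerivAt_abs_add_mul {u w : ℝ} (h : u = 0 → w = 0) :
    HasDerivAt (fun t => |u + t * w|) (Real.sign u * w) 0 := by
  rcases lt_trichotomy u 0 with hu | rfl | hu
  · refine ((hasDerivAt_abs_neg (by simpa using hu)).comp 0
      (hasDerivAt_const_add_mul u w)).congr_deriv ?_
    simp [Real.sign_of_neg hu]
  · simpa [h rfl] using hasDerivAt_const (0 : ℝ) (0 : ℝ)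
  · refine ((hasDerivAt_abs_pos (by simpa using hu)).comp 0
      (hasDerivAt_const_add_mul u w)).congr_deriv ?_
    simp [Real.sign_of_pos hu]

theorem hasDerivAt_lassoObj_line {N Q P : ℕ} (Φ : Matrix (Fin Q) (Fin N) ℝ)
    (D : Matrix (Fin N) (Fin P) ℝ) (y : Fin Q → ℝ) (lam : ℝ) (x h : Fin N → ℝ)
    (hh : ∀ j, (Dᵀ *ᵥ x) j = 0 → (Dᵀ *ᵥ h) j = 0) :
    HasDerivAt (fun t : ℝ => lassoObj Φ D y lam (x + t • h))
      ((Φ *ᵥ x - y) ⬝ᵥ (Φ *ᵥ h)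
        + lam * ((fun j => Real.sign ((Dᵀ *ᵥ x) j)) ⬝ᵥ (Dᵀ *ᵥ h))) 0 := by
  simp only [lassoObj, mulVec_add, mulVec_smul, Pi.add_apply, Pi.smul_apply, smul_eq_mul]
  have hquad (i : Fin Q) : HasDerivAt (fun t => (y i - ((Φ *ᵥ x) i + t * (Φ *ᵥ h) i)) ^ 2)
      (2 * ((Φ *ᵥ x) i - y i) * (Φ *ᵥ h) i) 0 := by
    refine (((hasDerivAt_const_add_mul _ _).const_sub (y i)).fun_pow 2).congr_deriv ?_
    simp only [Nat.cast_ofNat, zero_mul, add_zero, Nat.add_one_sub_one, pow_one, mul_neg]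
    ring
  refine (((HasDerivAt.fun_sum fun i _ => hquad i).const_mul (1 / 2)).add
    ((HasDerivAt.fun_sum fun j _ => hasDerivAt_abs_add_mul (hh j)).const_mul lam)).congr_deriv ?_
  simp only [dotProduct, Finset.mul_sum, Pi.sub_apply]
  congr 1
  exact Finset.sum_congr rfl fun i _ => by ring

theorem IsLassoSol.dotProduct_eq_zero {N Q P : ℕ} {Φ : Matrix (Fin Q) (Fin N) ℝ}
    {D : Matrix (Fin N) (Fin P) ℝ} {y : Fin Q → ℝ} {lam : ℝ} {x : Fin N → ℝ}
    (hx : IsLassoSol Φ D y lam x) {h : Fin N → ℝ} (hh : h ∈ GJ D {j | (Dᵀ *ᵥ x) j = 0}) :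
    (Φᵀ *ᵥ (Φ *ᵥ x - y) + lam • (D *ᵥ fun j => Real.sign ((Dᵀ *ᵥ x) j))) ⬝ᵥ h = 0 := by
  have hmin : IsLocalMin (fun t : ℝ => lassoObj Φ D y lam (x + t • h)) 0 :=
    Filter.Eventually.of_forall fun t => by simpa using hx (x + t • h)
  have := hmin.hasDerivAt_eq_zero (hasDerivAt_lassoObj_line Φ D y lam x h hh)
  rwa [add_dotProduct, smul_dotProduct, mulVec_transpose Φ, ← vecMul_transpose D,
    ← dotProduct_mulVec, ← dotProduct_mulVec, smul_eq_mul]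

namespace ColBasis

variable {N Q r : ℕ} {U : Matrix (Fin N) (Fin r) ℝ} {G : Submodule ℝ (Fin N → ℝ)}

theorem range_mulVecLin (hU : ColBasis U G) : LinearMap.range U.mulVecLin = G :=
  (Matrix.range_mulVecLin U).trans hU.2

theorem mulVec_injective (hU : ColBasis U G) : Function.Injective U.mulVec :=
  mulVec_injective_iff.mpr hU.1

theorem mulVec_mem (hU : ColBasis U G) (c : Fin r → ℝ) : U *ᵥ c ∈ G :=
  hU.range_mulVecLin ▸ LinearMap.mem_range_self U.mulVecLin c

theorem exists_mulVec_eq (hU : ColBasis U G) {x : Fin N → ℝ} (hx : x ∈ G) :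
    ∃ c, U *ᵥ c = x :=
  LinearMap.mem_range.mp (hU.range_mulVecLin ▸ hx)

theorem transpose_mulVec_eq_zero (hU : ColBasis U G) {g : Fin N → ℝ}
    (hg : ∀ h ∈ G, g ⬝ᵥ h = 0) : Uᵀ *ᵥ g = 0 := by
  ext k
  rw [mulVec_transpose]
  exact hg _ (hU.2 ▸ Submodule.subset_span (Set.mem_range_self k))

theorem posDef_gram (hU : ColBasis U G) {Φ : Matrix (Fin Q) (Fin N) ℝ}
    (hΦ : ∀ x, Φ *ᵥ x = 0 → x ∈ G → x = 0) : (Uᵀ * Φᵀ * Φ * U).PosDef := by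
  have hinj : Function.Injective (Φ * U).mulVec := by
    intro a b hab
    apply hU.mulVec_injective
    rw [← sub_eq_zero, ← mulVec_sub]
    refine hΦ _ ?_ (hU.mulVec_mem _)
    rw [mulVec_mulVec, mulVec_sub, hab, sub_self]
  simpa [Matrix.mul_assoc, transpose_mul] using PosDef.conjTranspose_mul_self _ hinj

theorem eq_AJmat_mulVec (hU : ColBasis U G) {Φ : Matrix (Fin Q) (Fin N) ℝ}
    (hΦ : ∀ x, Φ *ᵥ x = 0 → x ∈ G → x = 0) {x v : Fin N → ℝ} (hx : x ∈ G)
    (hv : Uᵀ *ᵥ (Φᵀ *ᵥ (Φ *ᵥ x)) = Uᵀ *ᵥ v) : x = AJmat Φ U *ᵥ v := by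
  obtain ⟨c, rfl⟩ := hU.exists_mulVec_eq hx
  have hM : IsUnit (Uᵀ * Φᵀ * Φ * U).det :=
    (isUnit_iff_isUnit_det _).mp (hU.posDef_gram hΦ).isUnit
  replace hv : (Uᵀ * Φᵀ * Φ * U) *ᵥ c = Uᵀ *ᵥ v := by
    simpa only [mulVec_mulVec, Matrix.mul_assoc] using hv
  rw [AJmat, ← mulVec_mulVec, ← mulVec_mulVec, ← hv, mulVec_mulVec c, nonsing_inv_mul _ hM,
    one_mulVec]

end ColBasis

theorem lasso_implicit_equation_general
    {N Q P : ℕ}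
    (Φ : Matrix (Fin Q) (Fin N) ℝ) (D : Matrix (Fin N) (Fin P) ℝ)
    (y : Fin Q → ℝ) (lam : ℝ)
    (xs : Fin N → ℝ) (hxs : IsLassoSol Φ D y lam xs)
    (J : Set (Fin P)) (hJ : J = {j | Dᵀ.mulVec xs j = 0})
    (hHJ : HJcond Φ D J)
    (r : ℕ) (U : Matrix (Fin N) (Fin r) ℝ) (hU : ColBasis U (GJ D J)) :
    xs = (AJmat Φ U).mulVec (Φᵀ.mulVec y)
        - lam • (AJmat Φ U).mulVec (D.mulVec (fun i => Real.sign (Dᵀ.mulVec xs i))) := by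
  subst hJ
  have hxs_mem : xs ∈ GJ D {j | (Dᵀ *ᵥ xs) j = 0} := fun _ hj => hj
  have hresidual := hU.transpose_mulVec_eq_zero fun _ => hxs.dotProduct_eq_zero
  rw [← mulVec_smul, ← mulVec_sub]
  refine hU.eq_AJmat_mulVec hHJ hxs_mem ?_
  rw [← sub_eq_zero, ← mulVec_sub, ← hresidual]
  congr 1
  rw [mulVec_sub]
  abel

/-- Implicit equation: a solution `x⋆` of `(P_λ(y))` with `D`-cosupport `J` satisfying
`(H_J)` obeys `x⋆ = A^[J] Φ* y − λ A^[J] D_I s_I` where `s = sign(D* x⋆)`. -/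
theorem lasso_implicit_equation
    {N Q P : ℕ} (hN : 0 < N) (hQ : 0 < Q) (hP : 0 < P)
    (Φ : Matrix (Fin Q) (Fin N) ℝ) (D : Matrix (Fin N) (Fin P) ℝ)
    (y : Fin Q → ℝ) (lam : ℝ) (hlam : 0 < lam)
    (xs : Fin N → ℝ) (hxs : IsLassoSol Φ D y lam xs)
    (J : Set (Fin P)) (hJ : J = {j | Dᵀ.mulVec xs j = 0})
    (hHJ : HJcond Φ D J)
    (r : ℕ) (U : Matrix (Fin N) (Fin r) ℝ) (hU : ColBasis U (GJ D J)) :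
    xs = (AJmat Φ U).mulVec (Φᵀ.mulVec y)
        - lam • (AJmat Φ U).mulVec (D.mulVec (fun i => Real.sign (Dᵀ.mulVec xs i))) :=
  lasso_implicit_equation_general Φ D y lam xs hxs J hJ hHJ r U hU
end

section
/- If x₁ and x₂ are both global minimizers of L_{y,λ}, then Φ x₁ = Φ x₂. Consequently the prediction μ_λ(y) = Φ x⋆, for x⋆ any solution of (P_λ(y)), is a well-defined single-valued function of y. -/
/-! The quadratic term `x ↦ ½‖y − Φx‖²` is strictly convex as a function of `Φx` and the
`ℓ¹` term is convex, so at the midpoint `m` of two points the objective lies at least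
`‖Φx₁ − Φx₂‖² / 8` below the average of its values there. If `x₁` and `x₂` are both
minimizers, these values agree and `L(m)` cannot fall below them, so `Φx₁ = Φx₂`. -/

open Matrix MeasureTheory ProbabilityTheory

open Finset

section MidpointSums

variable {ι : Type*} [Fintype ι]

theorem sum_sq_sub_midpoint (c a b : ι → ℝ) :
    ∑ i, (c i - (a i + b i) / 2) ^ 2
      = (∑ i, (c i - a i) ^ 2 + ∑ i, (c i - b i) ^ 2) / 2 - (∑ i, (a i - b i) ^ 2) / 4 := by
  calc ∑ i, (c i - (a i + b i) / 2) ^ 2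
      = ∑ i, ((c i - a i) ^ 2 / 2 + (c i - b i) ^ 2 / 2 - (a i - b i) ^ 2 / 4) :=
        sum_congr rfl fun i _ ↦ by ring
    _ = _ := by rw [sum_sub_distrib, sum_add_distrib, ← sum_div, ← sum_div, ← sum_div]; ring

theorem sum_abs_midpoint_le (a b : ι → ℝ) :
    ∑ i, |(a i + b i) / 2| ≤ (∑ i, |a i| + ∑ i, |b i|) / 2 := by
  rw [← sum_add_distrib, sum_div]
  refine sum_le_sum fun i _ ↦ ?_
  rw [abs_div, abs_two]
  gcongr
  exact abs_add_le _ _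

end MidpointSums

theorem mulVec_midpoint {m n : Type*} [Fintype n] (M : Matrix m n ℝ) (x x' : n → ℝ) :
    M *ᵥ (fun j ↦ (x j + x' j) / 2) = fun i ↦ ((M *ᵥ x) i + (M *ᵥ x') i) / 2 := by
  have hmid : (fun j ↦ (x j + x' j) / 2) = (2⁻¹ : ℝ) • (x + x') := by
    ext j; simp [div_eq_inv_mul]
  rw [hmid, mulVec_smul, mulVec_add]
  ext i
  simp [div_eq_inv_mul]

theorem lassoObj_midpoint_le {N Q P : ℕ} (Φ : Matrix (Fin Q) (Fin N) ℝ)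
    (D : Matrix (Fin N) (Fin P) ℝ) (y : Fin Q → ℝ) {lam : ℝ} (hlam : 0 ≤ lam)
    (x x' : Fin N → ℝ) :
    lassoObj Φ D y lam (fun j ↦ (x j + x' j) / 2)
      ≤ (lassoObj Φ D y lam x + lassoObj Φ D y lam x') / 2
        - (∑ i, ((Φ *ᵥ x) i - (Φ *ᵥ x') i) ^ 2) / 8 := by
  have hl1 := mul_le_mul_of_nonneg_left (sum_abs_midpoint_le (Dᵀ *ᵥ x) (Dᵀ *ᵥ x')) hlam
  simp only [lassoObj, mulVec_midpoint, sum_sq_sub_midpoint]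
  linarith

theorem lasso_unique_image_general
    {N Q P : ℕ}
    (Φ : Matrix (Fin Q) (Fin N) ℝ) (D : Matrix (Fin N) (Fin P) ℝ)
    (y : Fin Q → ℝ) (lam : ℝ) (hlam : 0 < lam)
    (x1 x2 : Fin N → ℝ)
    (h1 : IsLassoSol Φ D y lam x1) (h2 : IsLassoSol Φ D y lam x2) :
    Φ.mulVec x1 = Φ.mulVec x2 := by
  have hmid := lassoObj_midpoint_le Φ D y hlam.le x1 x2
  have h12 := h1 x2
  have h21 := h2 x1
  have hmin := h1 fun j ↦ (x1 j + x2 j) / 2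
  have hsq : ∑ i, ((Φ *ᵥ x1) i - (Φ *ᵥ x2) i) ^ 2 = 0 :=
    le_antisymm (by linarith) (sum_nonneg fun i _ ↦ sq_nonneg _)
  ext i
  rw [sum_eq_zero_iff_of_nonneg fun i _ ↦ sq_nonneg _] at hsq
  exact sub_eq_zero.mp (pow_eq_zero_iff two_ne_zero |>.mp (hsq i (mem_univ i)))

/-- All global minimizers of `L_{y,λ}` share the same image under `Φ`, so the prediction
`μ_λ(y) = Φ x⋆` is a well-defined single-valued function of `y`. -/
theorem lasso_unique_image
    {N Q P : ℕ} (hN : 0 < N) (hQ : 0 < Q) (hP : 0 < P)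
    (Φ : Matrix (Fin Q) (Fin N) ℝ) (D : Matrix (Fin N) (Fin P) ℝ)
    (y : Fin Q → ℝ) (lam : ℝ) (hlam : 0 < lam)
    (x1 x2 : Fin N → ℝ)
    (h1 : IsLassoSol Φ D y lam x1) (h2 : IsLassoSol Φ D y lam x2) :
    Φ.mulVec x1 = Φ.mulVec x2 :=
  lasso_unique_image_general Φ D y lam hlam x1 x2 h1 h2
end

section
/- For every fixed λ > 0, the λ-restricted transition space H_{·,λ} = {y ∈ ℝ^Q : (y, λ) ∈ H} has Lebesgue measure zero in ℝ^Q. -/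
open Matrix MeasureTheory ProbabilityTheory

/-- Orthogonal projection onto a subspace of `Fin n → ℝ` (Euclidean inner product). -/
noncomputable def projG {n : ℕ} (G : Submodule ℝ (Fin n → ℝ)) (v : Fin n → ℝ) : Fin n → ℝ :=
  (EuclideanSpace.equiv (Fin n) ℝ)
    (Submodule.orthogonalProjection
      (G.map ((EuclideanSpace.equiv (Fin n) ℝ).symm.toLinearEquiv :
          (Fin n → ℝ) →ₗ[ℝ] EuclideanSpace ℝ (Fin n)))
      ((EuclideanSpace.equiv (Fin n) ℝ).symm v))

/-- `AJ` is a valid assignment of the matrix `A^[J]` to each `J` satisfying `(H_J)`;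
the value of `A^[J]` does not depend on the choice of basis matrix `U`. -/
def IsAJChoice {N Q P : ℕ} (Φ : Matrix (Fin Q) (Fin N) ℝ) (D : Matrix (Fin N) (Fin P) ℝ)
    (AJ : Set (Fin P) → Matrix (Fin N) (Fin N) ℝ) : Prop :=
  ∀ J : Set (Fin P), HJcond Φ D J →
    ∃ (r : ℕ) (U : Matrix (Fin N) (Fin r) ℝ), ColBasis U (GJ D J) ∧ AJ J = AJmat Φ U

/-- `Im D_S`: the span of the columns of `D` indexed by `S`, as a set of vectors. -/
def colSpan {N P : ℕ} (D : Matrix (Fin N) (Fin P) ℝ) (S : Set (Fin P)) : Set (Fin N → ℝ) :=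
  {w | ∃ v : Fin P → ℝ, (∀ i, i ∉ S → v i = 0) ∧ w = D.mulVec v}

/-- The transition space `H ⊆ ℝ^Q × ℝ₊`: union over `J` satisfying `(H_J)`, `K ⊆ J` with
`Im Π̃^[J] ⊄ Im D_{J∖K}`, and sign vectors `s` on `J^c` and `σ` on `K`, of the sets where
`Proj_{G_{J∖K}}(Π̃^[J] y) = Proj_{G_{J∖K}}(λ(C̃^[J] s_{J^c} − D_K σ_K))`. -/
noncomputable def transitionSpace {N Q P : ℕ} (Φ : Matrix (Fin Q) (Fin N) ℝ)
    (D : Matrix (Fin N) (Fin P) ℝ) (AJ : Set (Fin P) → Matrix (Fin N) (Fin N) ℝ) :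
    Set ((Fin Q → ℝ) × ℝ) :=
  {p | 0 ≤ p.2 ∧
    ∃ (J K : Set (Fin P)) (s σ : Fin P → ℝ),
      HJcond Φ D J ∧ K ⊆ J ∧
      ¬ (Set.range (Φᵀ * (Φ * AJ J * Φᵀ - 1)).mulVec ⊆ colSpan D (J \ K)) ∧
      (∀ i, i ∉ J → s i = 1 ∨ s i = -1) ∧ (∀ i ∈ J, s i = 0) ∧
      (∀ i ∈ K, σ i = 1 ∨ σ i = -1) ∧ (∀ i, i ∉ K → σ i = 0) ∧
      projG (GJ D (J \ K)) ((Φᵀ * (Φ * AJ J * Φᵀ - 1)).mulVec p.1)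
        = projG (GJ D (J \ K))
            (p.2 • ((Φᵀ * Φ * AJ J - 1).mulVec (D.mulVec s) - D.mulVec σ))}

/-! The slice at `λ` is a finite union of level sets of the linear maps
`y ↦ Proj_{G_{J∖K}}(Π̃^[J] y)`. As `G_{J∖K}` is the orthogonal complement of `Im D_{J∖K}`, such a
map vanishes exactly on the preimage of `Im D_{J∖K}`, so the condition `Im Π̃^[J] ⊄ Im D_{J∖K}`
makes it nonzero, and the level sets of a nonzero linear map are Lebesgue-null. -/

lemma addHaar_preimage_singleton_of_ne_zero {E F : Type*} [NormedAddCommGroup E]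
    [NormedSpace ℝ E] [MeasurableSpace E] [BorelSpace E] [FiniteDimensional ℝ E]
    [AddCommGroup F] [Module ℝ F] (μ : Measure E) [μ.IsAddHaarMeasure]
    {L : E →ₗ[ℝ] F} (hL : L ≠ 0) (c : F) : μ (L ⁻¹' {c}) = 0 := by
  rcases Set.eq_empty_or_nonempty (L ⁻¹' {c}) with h | ⟨y₀, hy₀⟩
  · rw [h, measure_empty]
  · have hfiber : L ⁻¹' {c} = (· + -y₀) ⁻¹' (LinearMap.ker L : Set E) := by
      ext y
      simp_all [← sub_eq_add_neg, sub_eq_zero]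
    rw [hfiber, measure_preimage_add_right]
    exact Measure.addHaar_submodule μ _ fun h => hL (LinearMap.ker_eq_top.mp h)

noncomputable def projGLinear {n : ℕ} (G : Submodule ℝ (Fin n → ℝ)) : Module.End ℝ (Fin n → ℝ) :=
  (EuclideanSpace.equiv (Fin n) ℝ).toLinearEquiv.conj
    (G.map (EuclideanSpace.equiv (Fin n) ℝ).symm.toLinearEquiv.toLinearMap).starProjection

lemma projGLinear_apply {n : ℕ} (G : Submodule ℝ (Fin n → ℝ)) (v : Fin n → ℝ) :
    projGLinear G v = projG G v := rfl

section ColumnSpace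

variable {N P : ℕ} (D : Matrix (Fin N) (Fin P) ℝ) (S : Set (Fin P))

def colSpanSubmodule : Submodule ℝ (Fin N → ℝ) :=
  (Submodule.pi Sᶜ fun _ => ⊥).map D.mulVecLin

lemma coe_colSpanSubmodule : (colSpanSubmodule D S : Set (Fin N → ℝ)) = colSpan D S := by
  ext w
  simp [colSpanSubmodule, colSpan, eq_comm]

lemma mem_GJ_iff_forall_dotProduct (x : Fin N → ℝ) :
    x ∈ GJ D S ↔ ∀ w ∈ colSpan D S, w ⬝ᵥ x = 0 := by
  constructor
  · rintro hx _ ⟨v, hv, rfl⟩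
    rw [dotProduct_comm, Matrix.dotProduct_mulVec, ← Matrix.mulVec_transpose]
    refine Finset.sum_eq_zero fun i _ => ?_
    by_cases hi : i ∈ S
    · simp [hx i hi]
    · simp [hv i hi]
  · intro h j hj
    have := h _ ⟨Pi.single j 1, fun i hi => Pi.single_eq_of_ne (by rintro rfl; exact hi hj) 1, rfl⟩
    rwa [dotProduct_comm, Matrix.dotProduct_mulVec, ← Matrix.mulVec_transpose,
      dotProduct_single_one] at this

lemma map_GJ_eq_orthogonal :
    (GJ D S).map (EuclideanSpace.equiv (Fin N) ℝ).symm.toLinearEquiv.toLinearMap =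
      ((colSpanSubmodule D S).map
        (EuclideanSpace.equiv (Fin N) ℝ).symm.toLinearEquiv.toLinearMap)ᗮ := by
  ext x
  rw [Submodule.mem_map_equiv, mem_GJ_iff_forall_dotProduct, Submodule.mem_orthogonal]
  constructor
  · rintro h _ ⟨w, hw, rfl⟩
    rw [EuclideanSpace.inner_eq_star_dotProduct, star_trivial, dotProduct_comm]
    exact h w (by rwa [← coe_colSpanSubmodule])
  · intro h w hw
    have := h _ (Submodule.mem_map_of_mem (by rwa [← SetLike.mem_coe, coe_colSpanSubmodule]))
    rwa [EuclideanSpace.inner_eq_star_dotProduct, star_trivial, dotProduct_comm] at this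

lemma mem_colSpan_of_projG_eq_zero {v : Fin N → ℝ} (h : projG (GJ D S) v = 0) :
    v ∈ colSpan D S := by
  rw [← projGLinear_apply, projGLinear, LinearEquiv.conj_apply_apply, LinearEquiv.map_eq_zero_iff,
    ContinuousLinearMap.coe_coe, Submodule.starProjection_apply_eq_zero_iff, map_GJ_eq_orthogonal,
    Submodule.orthogonal_orthogonal, Submodule.mem_map_equiv] at h
  rwa [← coe_colSpanSubmodule]

lemma volume_projG_mulVec_levelSet {Q : ℕ} {M : Matrix (Fin N) (Fin Q) ℝ}
    (hM : ¬ Set.range M.mulVec ⊆ colSpan D S) (c : Fin N → ℝ) :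
    volume {y : Fin Q → ℝ | projG (GJ D S) (M *ᵥ y) = c} = 0 := by
  obtain ⟨_, ⟨y, rfl⟩, hy⟩ := Set.not_subset.mp hM
  have hL : projGLinear (GJ D S) ∘ₗ M.mulVecLin ≠ 0 := fun hL =>
    hy (mem_colSpan_of_projG_eq_zero D S (LinearMap.congr_fun hL y))
  exact addHaar_preimage_singleton_of_ne_zero volume hL c

end ColumnSpace

-- Sign vectors extended by zero, as `transitionSpace` encodes `s_{J^c}` and `σ_K`.
def signVectors (P : ℕ) : Set (Fin P → ℝ) :=
  Set.univ.pi fun _ => {-1, 0, 1}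

lemma finite_signVectors (P : ℕ) : (signVectors P).Finite :=
  Set.Finite.pi fun _ => Set.toFinite _

theorem restricted_transition_space_measure_zero_general
    {N Q P : ℕ}
    (Φ : Matrix (Fin Q) (Fin N) ℝ) (D : Matrix (Fin N) (Fin P) ℝ)
    (AJ : Set (Fin P) → Matrix (Fin N) (Fin N) ℝ)
    (lam : ℝ) :
    MeasureTheory.volume {y : Fin Q → ℝ | (y, lam) ∈ transitionSpace Φ D AJ} = 0 := by
  have hcover : {y : Fin Q → ℝ | (y, lam) ∈ transitionSpace Φ D AJ} ⊆
      ⋃ (J : Set (Fin P)) (K : Set (Fin P))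
        (_ : ¬ Set.range (Φᵀ * (Φ * AJ J * Φᵀ - 1)).mulVec ⊆ colSpan D (J \ K))
        (s ∈ signVectors P) (σ ∈ signVectors P),
        {y | projG (GJ D (J \ K)) ((Φᵀ * (Φ * AJ J * Φᵀ - 1)) *ᵥ y) = projG (GJ D (J \ K))
          (lam • ((Φᵀ * Φ * AJ J - 1) *ᵥ (D *ᵥ s) - D *ᵥ σ))} := by
    rintro y ⟨-, J, K, s, σ, -, -, hrange, hs, hs₀, hσ, hσ₀, hy⟩
    have hs' : s ∈ signVectors P := fun i _ => by
      by_cases hi : i ∈ J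
      · simp [hs₀ i hi]
      · rcases hs i hi with h | h <;> simp [h]
    have hσ' : σ ∈ signVectors P := fun i _ => by
      by_cases hi : i ∈ K
      · rcases hσ i hi with h | h <;> simp [h]
      · simp [hσ₀ i hi]
    simp only [Set.mem_iUnion]
    exact ⟨J, K, hrange, s, hs', σ, hσ', hy⟩
  refine measure_mono_null hcover <| measure_iUnion_null fun J => measure_iUnion_null fun K =>
    measure_iUnion_null fun hrange => ?_
  refine (measure_biUnion_null_iff (finite_signVectors P).countable).2 fun s _ =>
    (measure_biUnion_null_iff (finite_signVectors P).countable).2 fun σ _ => ?_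
  exact volume_projG_mulVec_levelSet D (J \ K) hrange _

/-- For every fixed `λ > 0`, the `λ`-restricted transition space
`H_{·,λ} = {y : (y, λ) ∈ H}` has Lebesgue measure zero in `ℝ^Q`. -/
theorem restricted_transition_space_measure_zero
    {N Q P : ℕ} (hN : 0 < N) (hQ : 0 < Q) (hP : 0 < P)
    (Φ : Matrix (Fin Q) (Fin N) ℝ) (D : Matrix (Fin N) (Fin P) ℝ)
    (hH0 : ∀ x : Fin N → ℝ, Φ.mulVec x = 0 → Dᵀ.mulVec x = 0 → x = 0)
    (AJ : Set (Fin P) → Matrix (Fin N) (Fin N) ℝ) (hAJ : IsAJChoice Φ D AJ)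
    (lam : ℝ) (hlam : 0 < lam) :
    MeasureTheory.volume {y : Fin Q → ℝ | (y, lam) ∈ transitionSpace Φ D AJ} = 0 :=
  restricted_transition_space_measure_zero_general Φ D AJ lam
end

section
/- Let x⋆ be a solution of (P_λ(y)) with D-cosupport J, and suppose (H_J) fails, i.e. Ker Φ ∩ G_J ≠ {0}. Then there exists a solution x⋆⋆ of (P_λ(y)) whose D-support is strictly contained in the D-support of x⋆, i.e. supp(D* x⋆⋆) ⊊ supp(D* x⋆). -/
open Matrix MeasureTheory ProbabilityTheory

/-!
Take `h ≠ 0` in `Ker Φ ∩ G_J`; by `(H₀)`, `D* h ≠ 0`. Moving along `x⋆ + t h` leaves the data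
term unchanged, and as long as `|t (D* h)ᵢ| ≤ |(D* x⋆)ᵢ|` for every `i` no coordinate of `D* x`
changes sign, so the objective is affine in `t` on that interval. Being minimal at the interior
point `t = 0`, it is constant there. The largest admissible `t` kills one more coordinate of `D* x`,
while `h ∈ G_J` guarantees that no coordinate of the cosupport is revived.
-/

lemma abs_add_add_abs_sub_of_abs_le {a c : ℝ} (h : |c| ≤ |a|) :
    |a + c| + |a - c| = 2 * |a| := by
  obtain ⟨hc₁, hc₂⟩ := abs_le.mp h
  rcases le_total 0 a with ha | ha
  · rw [abs_of_nonneg ha] at hc₁ hc₂ ⊢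
    rw [abs_of_nonneg (by linarith), abs_of_nonneg (by linarith)]
    ring
  · rw [abs_of_nonpos ha] at hc₁ hc₂ ⊢
    rw [abs_of_nonpos (by linarith), abs_of_nonpos (by linarith)]
    ring

/-- The witness is the largest `t` with `|t bⱼ| ≤ |aⱼ|` for all `j`, i.e. `min |aⱼ| / |bⱼ|`. -/
lemma exists_abs_mul_le_support_add_smul_ssubset {ι : Type*} [Fintype ι] {a b : ι → ℝ}
    (hab : ∀ j, a j = 0 → b j = 0) (hb : b ≠ 0) :
    ∃ t : ℝ, (∀ j, |t * b j| ≤ |a j|) ∧ Function.support (a + t • b) ⊂ Function.support a := by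
  classical
  obtain ⟨j₀, hj₀, hmin⟩ := Finset.exists_min_image {j | b j ≠ 0} (fun j => |a j| / |b j|)
    (by simpa [Finset.Nonempty, Function.ne_iff] using hb)
  have hbj₀ : b j₀ ≠ 0 := by simpa using hj₀
  have haj₀ : a j₀ ≠ 0 := fun h => hbj₀ (hab j₀ h)
  set t := -(a j₀ / b j₀)
  have hbound : ∀ j, |t * b j| ≤ |a j| := by
    intro j
    by_cases hbj : b j = 0
    · simp [hbj]
    · calc |t * b j| = |a j₀| / |b j₀| * |b j| := by rw [abs_mul, abs_neg, abs_div]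
        _ ≤ |a j| / |b j| * |b j| :=
          mul_le_mul_of_nonneg_right (hmin j (by simpa using hbj)) (abs_nonneg _)
        _ = |a j| := div_mul_cancel₀ _ (abs_ne_zero.mpr hbj)
  have hsubset : Function.support (a + t • b) ⊆ Function.support a := fun j hj haj => by
    have htb := hbound j
    rw [haj, abs_zero, abs_nonpos_iff] at htb
    exact hj (by simp [haj, htb])
  refine ⟨t, hbound, (Set.ssubset_iff_of_subset hsubset).mpr ⟨j₀, haj₀, ?_⟩⟩
  simp [t, field]

section Lasso

variable {N Q P : ℕ} {Φ : Matrix (Fin Q) (Fin N) ℝ} {D : Matrix (Fin N) (Fin P) ℝ}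
  {y : Fin Q → ℝ} {lam : ℝ} {x h : Fin N → ℝ}

lemma lassoObj_add_add_lassoObj_sub (hΦ : Φ *ᵥ h = 0)
    (hD : ∀ j, |(Dᵀ *ᵥ h) j| ≤ |(Dᵀ *ᵥ x) j|) :
    lassoObj Φ D y lam (x + h) + lassoObj Φ D y lam (x - h) = 2 * lassoObj Φ D y lam x := by
  have hℓ₁ : ∑ j, |(Dᵀ *ᵥ x) j + (Dᵀ *ᵥ h) j| + ∑ j, |(Dᵀ *ᵥ x) j - (Dᵀ *ᵥ h) j| =
      2 * ∑ j, |(Dᵀ *ᵥ x) j| := by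
    rw [← Finset.sum_add_distrib, Finset.mul_sum]
    exact Finset.sum_congr rfl fun j _ => abs_add_add_abs_sub_of_abs_le (hD j)
  simp only [lassoObj, mulVec_add, mulVec_sub, hΦ, Pi.add_apply, Pi.sub_apply, Pi.zero_apply,
    add_zero, sub_zero]
  linear_combination lam * hℓ₁

lemma IsLassoSol.add_of_abs_le (hx : IsLassoSol Φ D y lam x) (hΦ : Φ *ᵥ h = 0)
    (hD : ∀ j, |(Dᵀ *ᵥ h) j| ≤ |(Dᵀ *ᵥ x) j|) :
    IsLassoSol Φ D y lam (x + h) := fun x' => by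
  have hsegment := lassoObj_add_add_lassoObj_sub (y := y) (lam := lam) hΦ hD
  linarith [hx (x - h), hx x']

end Lasso

theorem lasso_support_reduction_general
    {N Q P : ℕ}
    (Φ : Matrix (Fin Q) (Fin N) ℝ) (D : Matrix (Fin N) (Fin P) ℝ)
    (hH0 : ∀ x : Fin N → ℝ, Φ.mulVec x = 0 → Dᵀ.mulVec x = 0 → x = 0)
    (y : Fin Q → ℝ) (lam : ℝ)
    (xs : Fin N → ℝ) (hxs : IsLassoSol Φ D y lam xs)
    (J : Set (Fin P)) (hJ : J = {j | Dᵀ.mulVec xs j = 0})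
    (hnHJ : ¬ HJcond Φ D J) :
    ∃ xss : Fin N → ℝ, IsLassoSol Φ D y lam xss ∧
      {i | Dᵀ.mulVec xss i ≠ 0} ⊂ {i | Dᵀ.mulVec xs i ≠ 0} := by
  obtain ⟨h, hΦh, hGJ, hne⟩ : ∃ h, Φ *ᵥ h = 0 ∧ h ∈ GJ D J ∧ h ≠ 0 := by
    simpa [HJcond] using hnHJ
  have hcos : ∀ j, (Dᵀ *ᵥ xs) j = 0 → (Dᵀ *ᵥ h) j = 0 := fun j hj => hGJ j (hJ ▸ hj)
  have hDh : Dᵀ *ᵥ h ≠ 0 := fun h0 => hne (hH0 h hΦh h0)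
  obtain ⟨t, hbound, hsupp⟩ := exists_abs_mul_le_support_add_smul_ssubset hcos hDh
  refine ⟨xs + t • h, hxs.add_of_abs_le (by simp [mulVec_smul, hΦh]) ?_, ?_⟩
  · simpa [mulVec_smul] using hbound
  · simpa [mulVec_add, mulVec_smul, Function.support] using hsupp

/-- If `x⋆` is a solution of `(P_λ(y))` whose cosupport `J` fails `(H_J)`, then there is
another solution whose `D`-support is strictly contained in that of `x⋆`. -/
theorem lasso_support_reduction
    {N Q P : ℕ} (hN : 0 < N) (hQ : 0 < Q) (hP : 0 < P)
    (Φ : Matrix (Fin Q) (Fin N) ℝ) (D : Matrix (Fin N) (Fin P) ℝ)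
    (hH0 : ∀ x : Fin N → ℝ, Φ.mulVec x = 0 → Dᵀ.mulVec x = 0 → x = 0)
    (y : Fin Q → ℝ) (lam : ℝ) (hlam : 0 < lam)
    (xs : Fin N → ℝ) (hxs : IsLassoSol Φ D y lam xs)
    (J : Set (Fin P)) (hJ : J = {j | Dᵀ.mulVec xs j = 0})
    (hnHJ : ¬ HJcond Φ D J) :
    ∃ xss : Fin N → ℝ, IsLassoSol Φ D y lam xss ∧
      {i | Dᵀ.mulVec xss i ≠ 0} ⊂ {i | Dᵀ.mulVec xs i ≠ 0} :=
  lasso_support_reduction_general Φ D hH0 y lam xs hxs J hJ hnHJ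
end

section
/- Let x⋆ be a solution of (P_λ(y)) with D-cosupport J, and let z ∈ Ker Φ ∩ G_J with z ≠ 0. Define B = {t ∈ ℝ : sign(D*(x⋆ + t z)) = sign(D* x⋆)}. Then B is a bounded open interval of ℝ containing 0, say B = (t₁, t₀) with −∞ < t₁ < 0 < t₀ < +∞; for every t ∈ B, the vector x⋆ + t z is a solution of (P_λ(y)) with Φ(x⋆ + t z) = Φ x⋆ and ‖D*(x⋆ + t z)‖₁ = ‖D* x⋆‖₁; and x⋆ + t₀ z is also a solution of (P_λ(y)) whose D-support is strictly contained in supp(D* x⋆). -/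
/-! Write `a = D* x⋆` and `b = D* z`, so that `b` vanishes off the support of `a`. Along the line
`x⋆ + t z` the data term is constant, so up to a constant the objective is `λ ∑ |aᵢ + t bᵢ|`.
Each condition `sign (aᵢ + t bᵢ) = sign aᵢ` cuts out an open half-line around `0` (or all of `ℝ`),
so `B` is an open interval on which `t ↦ ∑ |aᵢ + t bᵢ|` is affine. Minimality at `0` forces its
slope `∑ sign (aᵢ) bᵢ` to vanish, hence some `aᵢ bᵢ` of each sign occur and `B` is bounded. The
objective stays constant on the closure `[t₁, t₀]`, and at `t₀` some `aᵢ ≠ 0` has been cancelled. -/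

open Matrix MeasureTheory ProbabilityTheory

open Set Filter Topology

namespace Real

lemma abs_eq_sign_mul (u : ℝ) : |u| = sign u * u := by
  rcases lt_trichotomy u 0 with hu | rfl | hu
  · rw [sign_of_neg hu, abs_of_neg hu]; ring
  · simp
  · rw [sign_of_pos hu, abs_of_pos hu]; ring

lemma sign_eq_sign_iff_mul_pos {a u : ℝ} (ha : a ≠ 0) : sign u = sign a ↔ 0 < a * u := by
  constructor
  · intro h
    rcases ha.lt_or_gt with ha | ha <;> rcases lt_trichotomy u 0 with hu | hu | hu <;>
      simp [sign_of_neg, sign_of_pos, ha, hu] at h ⊢ <;> nlinarith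
  · intro h
    rcases mul_pos_iff.1 h with ⟨ha, hu⟩ | ⟨ha, hu⟩
    · rw [sign_of_pos ha, sign_of_pos hu]
    · rw [sign_of_neg ha, sign_of_neg hu]

lemma mul_nonneg_of_sign_eq {a u : ℝ} (h : sign u = sign a) : 0 ≤ a * u := by
  rcases eq_or_ne a 0 with rfl | ha
  · simp
  · exact ((sign_eq_sign_iff_mul_pos ha).1 h).le

lemma abs_eq_sign_mul_of_mul_nonneg {a u : ℝ} (h : 0 ≤ a * u) (hu : a = 0 → u = 0) :
    |u| = sign a * u := by
  rcases eq_or_ne u 0 with rfl | hu0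
  · simp
  have ha : a ≠ 0 := fun ha => hu0 (hu ha)
  rw [abs_eq_sign_mul, (sign_eq_sign_iff_mul_pos ha).2 (h.lt_of_ne' (mul_ne_zero ha hu0))]

lemma sign_add_mul_eq_sign_iff {a b t : ℝ} (hab : a = 0 → b = 0) :
    sign (a + t * b) = sign a ↔ (0 < a * b → -a / b < t) ∧ (a * b < 0 → t < -a / b) := by
  rcases eq_or_ne a 0 with rfl | ha
  · simp [hab rfl]
  have hc : -a / b = -(a * a) / (a * b) := by rw [← mul_div_mul_left (-a) b ha]; ring
  rw [sign_eq_sign_iff_mul_pos ha, hc, show a * (a + t * b) = a * a + t * (a * b) by ring]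
  rcases lt_trichotomy (a * b) 0 with hn | h0 | hp
  · rw [lt_div_iff_of_neg hn]
    constructor
    · intro h; exact ⟨fun h' => absurd h' hn.not_gt, fun _ => by linarith⟩
    · rintro ⟨-, h⟩; linarith [h hn]
  · have hb : b = 0 := (mul_eq_zero.1 h0).resolve_left ha
    simp [hb, mul_self_pos.2 ha]
  · rw [div_lt_iff₀ hp]
    constructor
    · intro h; exact ⟨fun _ => by linarith, fun h' => absurd h' hp.not_gt⟩
    · rintro ⟨h, -⟩; linarith [h hp]

end Real

lemma Finset.setOf_forall_lt_and_forall_gt_eq_Ioo {ι α : Type*} [LinearOrder α] (c : ι → α)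
    {L U : Finset ι} (hL : L.Nonempty) (hU : U.Nonempty) :
    {t | (∀ i ∈ L, c i < t) ∧ ∀ i ∈ U, t < c i} =
      Set.Ioo (L.sup' hL c) (U.inf' hU c) := by
  ext t
  simp [Finset.sup'_lt_iff, Finset.lt_inf'_iff]

section SignStable

variable {ι : Type*} {a b : ι → ℝ}

lemma eventually_sign_add_mul_eq [Fintype ι] (hab : ∀ i, a i = 0 → b i = 0) :
    ∀ᶠ t in 𝓝 (0 : ℝ), ∀ i, Real.sign (a i + t * b i) = Real.sign (a i) := by
  refine eventually_all.2 fun i => ?_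
  rcases eq_or_ne (a i) 0 with ha | ha
  · simp [ha, hab i ha]
  have hcont : Continuous fun t : ℝ => a i * (a i + t * b i) := by fun_prop
  have hpos : 0 < a i * (a i + 0 * b i) := by simpa using ha
  filter_upwards [(hcont.tendsto 0).eventually (lt_mem_nhds hpos)] with t ht
  exact (Real.sign_eq_sign_iff_mul_pos ha).2 ht

lemma sum_abs_add_mul_eq [Fintype ι] {t : ℝ} (hab : ∀ i, a i = 0 → b i = 0)
    (h : ∀ i, 0 ≤ a i * (a i + t * b i)) :
    ∑ i, |a i + t * b i| = ∑ i, |a i| + t * ∑ i, Real.sign (a i) * b i := by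
  have hterm : ∀ i, |a i + t * b i| = |a i| + t * (Real.sign (a i) * b i) := fun i => by
    rw [Real.abs_eq_sign_mul_of_mul_nonneg (h i) fun ha => by simp [ha, hab i ha],
      Real.abs_eq_sign_mul (a i)]
    ring
  simp only [hterm, Finset.sum_add_distrib, Finset.mul_sum]

/-- Near `0` the function `t ↦ ∑ |a i + t b i|` is affine with slope `∑ sign (a i) b i`,
so this slope vanishes when `0` is a minimum. -/
lemma sum_sign_mul_eq_zero [Fintype ι] (hab : ∀ i, a i = 0 → b i = 0)
    (hmin : ∀ t : ℝ, ∑ i, |a i| ≤ ∑ i, |a i + t * b i|) :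
    ∑ i, Real.sign (a i) * b i = 0 := by
  obtain ⟨ε, hε, hball⟩ := Metric.eventually_nhds_iff.1 (eventually_sign_add_mul_eq hab)
  have hslope : ∀ t : ℝ, |t| < ε → 0 ≤ t * ∑ i, Real.sign (a i) * b i := fun t ht => by
    have h := hmin t
    rw [sum_abs_add_mul_eq hab fun i => Real.mul_nonneg_of_sign_eq
      (hball (by simpa using ht) i)] at h
    linarith
  have hpos := hslope (ε / 2) (by rw [abs_of_pos (half_pos hε)]; linarith)
  have hneg := hslope (-(ε / 2)) (by rw [abs_neg, abs_of_pos (half_pos hε)]; linarith)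
  nlinarith

lemma exists_mul_neg_of_sum_sign_mul_eq_zero [Fintype ι] (hab : ∀ i, a i = 0 → b i = 0)
    (hb : b ≠ 0) (hs : ∑ i, Real.sign (a i) * b i = 0) : ∃ i, a i * b i < 0 := by
  by_contra! h
  have habs : ∀ i, |b i| = Real.sign (a i) * b i := fun i =>
    Real.abs_eq_sign_mul_of_mul_nonneg (h i) (hab i)
  simp only [← habs] at hs
  exact hb (funext fun i => abs_eq_zero.1
    ((Finset.sum_eq_zero_iff_of_nonneg fun i _ => abs_nonneg (b i)).1 hs i (Finset.mem_univ i)))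

lemma exists_setOf_sign_add_mul_eq_eq_Ioo [Fintype ι] (hab : ∀ i, a i = 0 → b i = 0)
    (hb : b ≠ 0) (hmin : ∀ t : ℝ, ∑ i, |a i| ≤ ∑ i, |a i + t * b i|) :
    ∃ t₁ t₀ : ℝ,
      {t : ℝ | ∀ i, Real.sign (a i + t * b i) = Real.sign (a i)} = Ioo t₁ t₀ := by
  classical
  have hs := sum_sign_mul_eq_zero hab hmin
  obtain ⟨j, hj⟩ := exists_mul_neg_of_sum_sign_mul_eq_zero hab hb hs
  obtain ⟨k, hk⟩ := exists_mul_neg_of_sum_sign_mul_eq_zero (a := a) (b := -b)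
    (fun i ha => by simp [hab i ha]) (neg_ne_zero.2 hb) (by simp [hs])
  set L := Finset.univ.filter fun i => 0 < a i * b i
  set U := Finset.univ.filter fun i => a i * b i < 0
  have hL : L.Nonempty := ⟨k, by simpa [L] using hk⟩
  have hU : U.Nonempty := ⟨j, by simpa [U] using hj⟩
  refine ⟨L.sup' hL fun i => -a i / b i, U.inf' hU fun i => -a i / b i, ?_⟩
  rw [← Finset.setOf_forall_lt_and_forall_gt_eq_Ioo]
  ext t
  simp [L, U, Real.sign_add_mul_eq_sign_iff (hab _), forall_and]

lemma mul_add_mul_nonneg_of_mem_Icc {t₁ t₀ : ℝ} (ht : t₁ < t₀)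
    (hB : {t : ℝ | ∀ i, Real.sign (a i + t * b i) = Real.sign (a i)} = Ioo t₁ t₀) :
    ∀ t ∈ Icc t₁ t₀, ∀ i, 0 ≤ a i * (a i + t * b i) := by
  have hclosed : IsClosed {t : ℝ | ∀ i, 0 ≤ a i * (a i + t * b i)} := by
    simp only [ofPred_forall]
    exact isClosed_iInter fun i => isClosed_le continuous_const (by fun_prop)
  rw [← closure_Ioo ht.ne]
  refine closure_minimal (fun t ht i => ?_) hclosed
  rw [← hB] at ht
  exact Real.mul_nonneg_of_sign_eq (ht i)

theorem exists_Ioo_sign_stable_of_forall_sum_abs_le [Fintype ι] (hab : ∀ i, a i = 0 → b i = 0)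
    (hb : b ≠ 0) (hmin : ∀ t : ℝ, ∑ i, |a i| ≤ ∑ i, |a i + t * b i|) :
    ∃ t₁ t₀ : ℝ, t₁ < 0 ∧ 0 < t₀ ∧
      {t : ℝ | ∀ i, Real.sign (a i + t * b i) = Real.sign (a i)} = Ioo t₁ t₀ ∧
      (∀ t ∈ Icc t₁ t₀, ∑ i, |a i + t * b i| = ∑ i, |a i|) ∧
      {i | a i + t₀ * b i ≠ 0} ⊂ {i | a i ≠ 0} := by
  obtain ⟨t₁, t₀, hB⟩ := exists_setOf_sign_add_mul_eq_eq_Ioo hab hb hmin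
  have h0 : (0 : ℝ) ∈ Ioo t₁ t₀ := by rw [← hB]; simp
  have hnonneg := mul_add_mul_nonneg_of_mem_Icc (h0.1.trans h0.2) hB
  have ht₀ : t₀ ∈ Icc t₁ t₀ := ⟨(h0.1.trans h0.2).le, le_rfl⟩
  refine ⟨t₁, t₀, h0.1, h0.2, hB, fun t ht => ?_, ?_⟩
  · rw [sum_abs_add_mul_eq hab (hnonneg t ht), sum_sign_mul_eq_zero hab hmin, mul_zero,
      add_zero]
  have hsub : {i | a i + t₀ * b i ≠ 0} ⊆ {i | a i ≠ 0} := fun i hi ha =>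
    hi (by simp [ha, hab i ha])
  rw [Set.ssubset_iff_of_subset hsub]
  obtain ⟨i, hi⟩ : ∃ i, Real.sign (a i + t₀ * b i) ≠ Real.sign (a i) := by
    by_contra! h
    exact (hB.subset h).2.false
  have ha : a i ≠ 0 := fun ha => hi (by simp [ha, hab i ha])
  have hzero : a i * (a i + t₀ * b i) = 0 :=
    ((hnonneg t₀ ht₀ i).lt_or_eq.resolve_left fun h =>
      hi ((Real.sign_eq_sign_iff_mul_pos ha).2 h)).symm
  exact ⟨i, ha, fun h => h ((mul_eq_zero.1 hzero).resolve_left ha)⟩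

end SignStable

section Lasso

variable {N Q P : ℕ} {Φ : Matrix (Fin Q) (Fin N) ℝ} {D : Matrix (Fin N) (Fin P) ℝ}
  {y : Fin Q → ℝ} {lam : ℝ} {x z : Fin N → ℝ}

lemma lassoObj_add_of_mulVec_eq_zero_s19 (hz : Φ *ᵥ z = 0) :
    lassoObj Φ D y lam (x + z) = lassoObj Φ D y lam x +
      lam * (∑ j, |(Dᵀ *ᵥ (x + z)) j| - ∑ j, |(Dᵀ *ᵥ x) j|) := by
  unfold lassoObj
  rw [mulVec_add Φ, hz, add_zero]
  ring

lemma IsLassoSol.sum_abs_le (hx : IsLassoSol Φ D y lam x) (hlam : 0 < lam)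
    (hz : Φ *ᵥ z = 0) : ∑ j, |(Dᵀ *ᵥ x) j| ≤ ∑ j, |(Dᵀ *ᵥ (x + z)) j| := by
  have h := hx (x + z)
  rw [lassoObj_add_of_mulVec_eq_zero_s19 hz] at h
  nlinarith

lemma IsLassoSol.add_of_sum_abs_eq (hx : IsLassoSol Φ D y lam x) (hz : Φ *ᵥ z = 0)
    (h : ∑ j, |(Dᵀ *ᵥ (x + z)) j| = ∑ j, |(Dᵀ *ᵥ x) j|) :
    IsLassoSol Φ D y lam (x + z) := by
  intro x'
  rw [lassoObj_add_of_mulVec_eq_zero_s19 hz, h, sub_self, mul_zero, add_zero]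
  exact hx x'

end Lasso

theorem lasso_segment_of_solutions_general
    {N Q P : ℕ}
    (Φ : Matrix (Fin Q) (Fin N) ℝ) (D : Matrix (Fin N) (Fin P) ℝ)
    (hH0 : ∀ x : Fin N → ℝ, Φ.mulVec x = 0 → Dᵀ.mulVec x = 0 → x = 0)
    (y : Fin Q → ℝ) (lam : ℝ) (hlam : 0 < lam)
    (xs : Fin N → ℝ) (hxs : IsLassoSol Φ D y lam xs)
    (J : Set (Fin P)) (hJ : J = {j | Dᵀ.mulVec xs j = 0})
    (z : Fin N → ℝ) (hz0 : z ≠ 0) (hzker : Φ.mulVec z = 0) (hzG : z ∈ GJ D J) :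
    ∃ t₁ t₀ : ℝ, t₁ < 0 ∧ 0 < t₀ ∧
      {t : ℝ | (fun i => Real.sign (Dᵀ.mulVec (xs + t • z) i))
          = fun i => Real.sign (Dᵀ.mulVec xs i)} = Set.Ioo t₁ t₀ ∧
      (∀ t ∈ Set.Ioo t₁ t₀,
        IsLassoSol Φ D y lam (xs + t • z) ∧
        Φ.mulVec (xs + t • z) = Φ.mulVec xs ∧
        ∑ i, |Dᵀ.mulVec (xs + t • z) i| = ∑ i, |Dᵀ.mulVec xs i|) ∧
      IsLassoSol Φ D y lam (xs + t₀ • z) ∧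
      {i | Dᵀ.mulVec (xs + t₀ • z) i ≠ 0} ⊂ {i | Dᵀ.mulVec xs i ≠ 0} := by
  set a := Dᵀ *ᵥ xs
  set b := Dᵀ *ᵥ z
  have hline : ∀ t : ℝ, Dᵀ *ᵥ (xs + t • z) = fun i => a i + t * b i := fun t => by
    ext i; simp [a, b, mulVec_add, mulVec_smul]
  have hΦ : ∀ t : ℝ, Φ *ᵥ (t • z) = 0 := fun t => by rw [mulVec_smul, hzker, smul_zero]
  have hab : ∀ i, a i = 0 → b i = 0 := fun i hi => hzG i (hJ ▸ hi)
  have hb : b ≠ 0 := fun hb => hz0 (hH0 z hzker hb)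
  have hmin : ∀ t : ℝ, ∑ i, |a i| ≤ ∑ i, |a i + t * b i| := fun t => by
    simpa only [hline] using hxs.sum_abs_le hlam (hΦ t)
  obtain ⟨t₁, t₀, ht₁, ht₀, hB, hsum, hsupp⟩ :=
    exists_Ioo_sign_stable_of_forall_sum_abs_le hab hb hmin
  have hsol : ∀ t ∈ Icc t₁ t₀, IsLassoSol Φ D y lam (xs + t • z) := fun t ht =>
    hxs.add_of_sum_abs_eq (hΦ t) (by simpa only [hline] using hsum t ht)
  refine ⟨t₁, t₀, ht₁, ht₀, ?_, fun t ht => ⟨hsol t (Ioo_subset_Icc_self ht), ?_, ?_⟩,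
    hsol t₀ ⟨(ht₁.trans ht₀).le, le_rfl⟩, ?_⟩
  · simpa only [hline, funext_iff] using hB
  · rw [mulVec_add, hΦ, add_zero]
  · simpa only [hline] using hsum t (Ioo_subset_Icc_self ht)
  · simpa only [hline] using hsupp

/-- For a solution `x⋆` of `(P_λ(y))` with cosupport `J` and `0 ≠ z ∈ Ker Φ ∩ G_J`, the
set `B = {t : sign(D*(x⋆ + t z)) = sign(D* x⋆)}` is a bounded open interval `(t₁, t₀)`
containing `0`; on `B` all `x⋆ + t z` are solutions with the same `Φ`-image and the same
`ℓ¹` analysis norm as `x⋆`; and `x⋆ + t₀ z` is a solution whose `D`-support is strictly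
contained in `supp(D* x⋆)`. -/
theorem lasso_segment_of_solutions
    {N Q P : ℕ} (hN : 0 < N) (hQ : 0 < Q) (hP : 0 < P)
    (Φ : Matrix (Fin Q) (Fin N) ℝ) (D : Matrix (Fin N) (Fin P) ℝ)
    (hH0 : ∀ x : Fin N → ℝ, Φ.mulVec x = 0 → Dᵀ.mulVec x = 0 → x = 0)
    (y : Fin Q → ℝ) (lam : ℝ) (hlam : 0 < lam)
    (xs : Fin N → ℝ) (hxs : IsLassoSol Φ D y lam xs)
    (J : Set (Fin P)) (hJ : J = {j | Dᵀ.mulVec xs j = 0})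
    (z : Fin N → ℝ) (hz0 : z ≠ 0) (hzker : Φ.mulVec z = 0) (hzG : z ∈ GJ D J) :
    ∃ t₁ t₀ : ℝ, t₁ < 0 ∧ 0 < t₀ ∧
      {t : ℝ | (fun i => Real.sign (Dᵀ.mulVec (xs + t • z) i))
          = fun i => Real.sign (Dᵀ.mulVec xs i)} = Set.Ioo t₁ t₀ ∧
      (∀ t ∈ Set.Ioo t₁ t₀,
        IsLassoSol Φ D y lam (xs + t • z) ∧
        Φ.mulVec (xs + t • z) = Φ.mulVec xs ∧
        ∑ i, |Dᵀ.mulVec (xs + t • z) i| = ∑ i, |Dᵀ.mulVec xs i|) ∧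
      IsLassoSol Φ D y lam (xs + t₀ • z) ∧
      {i | Dᵀ.mulVec (xs + t₀ • z) i ≠ 0} ⊂ {i | Dᵀ.mulVec xs i ≠ 0} :=
  lasso_segment_of_solutions_general Φ D hH0 y lam hlam xs hxs J hJ z hz0 hzker hzG
end
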